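/- arXiv:1608.04422 — 2 statements merged into one kernel-verified Lean document; each statement's English description precedes it below -/
import Mathlib

section
/- Let F be a real p×m matrix, H ∈ ℝ^p, and let P₀ = {U ∈ ℝ^m : F U ≤ H} be nonempty. Let F' be a real q×m matrix, H' ∈ ℝ^q, and P = {U ∈ ℝ^m : F' U ≤ H'}. Then for every scalar s > 0 and vector r ∈ ℝ^m, the inclusion P₀ ⊆ s P + r holds if and only if there exists a real q×p matrix G with all entries nonnegative such that G F = F' and G H ≤ s H' + F' r (inequalities entrywise). -/
/-!
A nonempty polyhedron `{F U ≤ H}` lies in the half-space `{a ⬝ U ≤ β}` iff, by the affine Farkas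
lemma, `a = y F` and `y ⬝ H ≤ β` for some `y ≥ 0`; since the homothet `s P + r` is again the
polyhedron `{F' U ≤ s H' + F' r}`, applying this to each row of `F'` produces `G`.
Farkas' lemma comes from homogenizing to the cone generated by the rows `(F i, H i)` and `(0, 1)`
and separating a point from it by a hyperplane. That cone is closed because, by the conic
Carathéodory theorem, it is a finite union of images of orthants under injective linear maps.
-/

open Set Matrix

section Caratheodory

variable {ι E : Type*} [AddCommGroup E] [Module ℝ E]

theorem PointedCone.mem_hull_range_iff [Fintype ι] {v : ι → E} {x : E} :
    x ∈ PointedCone.hull ℝ (range v) ↔ ∃ y : ι → ℝ, 0 ≤ y ∧ ∑ i, y i • v i = x := by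
  rw [Submodule.mem_span_range_iff_exists_fun]
  constructor
  · rintro ⟨c, rfl⟩
    exact ⟨fun i => c i, fun i => (c i).2, by simp only [Nonneg.coe_smul]⟩
  · rintro ⟨y, hy, rfl⟩
    exact ⟨fun i => ⟨y i, hy i⟩, by simp only [Nonneg.mk_smul]⟩

theorem exists_erase_sum_smul_eq_of_not_linearIndepOn [DecidableEq ι] {v : ι → E} {s : Finset ι}
    (hs : ¬ LinearIndepOn ℝ v s) {y : ι → ℝ} (hy : ∀ i ∈ s, 0 ≤ y i) :
    ∃ i ∈ s, ∃ z : ι → ℝ, (∀ j ∈ s.erase i, 0 ≤ z j) ∧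
      ∑ j ∈ s.erase i, z j • v j = ∑ j ∈ s, y j • v j := by
  obtain ⟨g, hg, i₁, hi₁, hgi₁⟩ : ∃ g : ι → ℝ, ∑ j ∈ s, g j • v j = 0 ∧ ∃ i ∈ s, 0 < g i := by
    obtain ⟨g, hg, i, hi, hgi⟩ := not_linearIndepOn_finset_iff.mp hs
    rcases hgi.lt_or_gt with hneg | hpos
    · exact ⟨-g, by simp [neg_smul, hg], i, hi, by simpa using hneg⟩
    · exact ⟨g, hg, i, hi, hpos⟩
  -- move along the dependency `g` until the first coefficient of `y` vanishes
  obtain ⟨i, hi, hmin⟩ := (s.filter (0 < g ·)).exists_min_image (fun j => y j / g j)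
    ⟨i₁, Finset.mem_filter.mpr ⟨hi₁, hgi₁⟩⟩
  rw [Finset.mem_filter] at hi
  set t := y i / g i
  have ht : 0 ≤ t := div_nonneg (hy i hi.1) hi.2.le
  refine ⟨i, hi.1, y - t • g, fun j hj => ?_, ?_⟩
  · have hjs := Finset.mem_of_mem_erase hj
    suffices t * g j ≤ y j by simpa [sub_nonneg] using this
    rcases le_or_gt (g j) 0 with hgj | hgj
    · exact (mul_nonpos_of_nonneg_of_nonpos ht hgj).trans (hy j hjs)
    · exact (le_div_iff₀ hgj).mp (hmin j (Finset.mem_filter.mpr ⟨hjs, hgj⟩))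
  · rw [Finset.sum_erase s (by simp [t, div_mul_cancel₀ _ hi.2.ne'])]
    simp only [Pi.sub_apply, Pi.smul_apply, smul_eq_mul, sub_smul, mul_smul,
      Finset.sum_sub_distrib, ← Finset.smul_sum, hg, smul_zero, sub_zero]

theorem exists_linearIndepOn_sum_smul_eq [DecidableEq ι] (v : ι → E) (s : Finset ι) {y : ι → ℝ}
    (hy : ∀ i ∈ s, 0 ≤ y i) :
    ∃ t ⊆ s, LinearIndepOn ℝ v t ∧ ∃ z : ι → ℝ, (∀ i ∈ t, 0 ≤ z i) ∧
      ∑ i ∈ t, z i • v i = ∑ i ∈ s, y i • v i := by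
  induction s using Finset.strongInduction generalizing y with
  | H s ih =>
    by_cases hs : LinearIndepOn ℝ v s
    · exact ⟨s, subset_rfl, hs, y, hy, rfl⟩
    obtain ⟨i, hi, z, hz, hsum⟩ := exists_erase_sum_smul_eq_of_not_linearIndepOn hs hy
    obtain ⟨t, hts, ht, w, hw, hwsum⟩ := ih _ (Finset.erase_ssubset hi) hz
    exact ⟨t, hts.trans (s.erase_subset i), ht, w, hw, hwsum.trans hsum⟩

end Caratheodory

section Farkas

variable {ι E : Type*} [Fintype ι] [AddCommGroup E] [Module ℝ E] [TopologicalSpace E]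
  [IsTopologicalAddGroup E] [ContinuousSMul ℝ E] [T2Space E]

theorem PointedCone.isClosed_hull_range (v : ι → E) :
    IsClosed (PointedCone.hull ℝ (range v) : Set E) := by
  classical
  have hunion : (PointedCone.hull ℝ (range v) : Set E) =
      ⋃ (t : Finset ι) (_ : LinearIndepOn ℝ v t),
        Fintype.linearCombination ℝ (fun i : t => v i) '' Ici 0 := by
    ext x
    simp only [SetLike.mem_coe, mem_iUnion, mem_image, mem_Ici, exists_prop]
    constructor
    · intro hx
      obtain ⟨y, hy, rfl⟩ := PointedCone.mem_hull_range_iff.mp hx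
      obtain ⟨t, -, ht, z, hz, hsum⟩ :=
        exists_linearIndepOn_sum_smul_eq v Finset.univ (y := y) fun i _ => hy i
      refine ⟨t, ht, fun i => z i, fun i => hz i i.2, ?_⟩
      rw [Fintype.linearCombination_apply, Finset.sum_coe_sort t (fun i => z i • v i), hsum]
    · rintro ⟨t, -, z, hz, rfl⟩
      refine Submodule.span_mono (range_comp_subset_range ((↑) : t → ι) v) ?_
      exact PointedCone.mem_hull_range_iff.mpr ⟨z, hz, rfl⟩
  rw [hunion]
  refine isClosed_iUnion_of_finite fun t => isClosed_iUnion_of_finite fun ht => ?_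
  have hinj := linearIndependent_iff_injective_fintypeLinearCombination.mp ht
  exact (LinearMap.isClosedEmbedding_of_injective (LinearMap.ker_eq_bot.mpr hinj)).isClosedMap
    _ isClosed_Ici

theorem PointedCone.mem_hull_range_of_forall_nonneg [LocallyConvexSpace ℝ E] (v : ι → E) {c : E}
    (h : ∀ f : StrongDual ℝ E, (∀ i, 0 ≤ f (v i)) → 0 ≤ f c) :
    c ∈ PointedCone.hull ℝ (range v) := by
  by_contra hc
  obtain ⟨f, hf, hfc⟩ := ProperCone.hyperplane_separation_point
    ⟨PointedCone.hull ℝ (range v), PointedCone.isClosed_hull_range v⟩ hc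
  exact hfc.not_ge (h f fun i => hf _ (PointedCone.subset_hull (mem_range_self i)))

end Farkas

theorem StrongDual.apply_eq_dotProduct {κ : Type*} [Fintype κ] [DecidableEq κ]
    (f : StrongDual ℝ (κ → ℝ)) (x : κ → ℝ) : f x = (fun k => f (Pi.single k 1)) ⬝ᵥ x := by
  conv_lhs => rw [pi_eq_sum_univ' x]
  simp [map_sum, dotProduct, mul_comm]

section Polyhedra

variable {ι κ ν : Type*} [Fintype κ]

theorem Matrix.exists_nonneg_vecMul_eq [Fintype ι] (M : Matrix ι κ ℝ) {c : κ → ℝ}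
    (h : ∀ w, 0 ≤ M *ᵥ w → 0 ≤ c ⬝ᵥ w) : ∃ y, 0 ≤ y ∧ y ᵥ* M = c := by
  classical
  obtain ⟨y, hy, hyc⟩ := PointedCone.mem_hull_range_iff.mp <|
    PointedCone.mem_hull_range_of_forall_nonneg (fun i => M i) fun f hf => by
      rw [StrongDual.apply_eq_dotProduct, dotProduct_comm]
      refine h _ fun i => ?_
      have := hf i
      rwa [StrongDual.apply_eq_dotProduct, dotProduct_comm] at this
  exact ⟨y, hy, by rw [vecMul_eq_sum]; exact hyc⟩

theorem Matrix.dotProduct_nonpos_of_mulVec_nonpos {A : Matrix ι κ ℝ} {b : ι → ℝ} {c : κ → ℝ}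
    {d : ℝ} {x₀ : κ → ℝ} (hx₀ : A *ᵥ x₀ ≤ b) (h : ∀ x, A *ᵥ x ≤ b → c ⬝ᵥ x ≤ d) {u : κ → ℝ}
    (hu : A *ᵥ u ≤ 0) : c ⬝ᵥ u ≤ 0 := by
  by_contra! hcu
  have hd := h x₀ hx₀
  set t := (d - c ⬝ᵥ x₀ + 1) / c ⬝ᵥ u
  have ht : 0 ≤ t := div_nonneg (by linarith) hcu.le
  have hfeas : A *ᵥ (x₀ + t • u) ≤ b := fun i => by
    have := mul_nonpos_of_nonneg_of_nonpos ht (hu i)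
    simp only [mulVec_add, mulVec_smul, Pi.add_apply, Pi.smul_apply, smul_eq_mul]
    linarith [hx₀ i]
  have := h _ hfeas
  rw [dotProduct_add, dotProduct_smul, smul_eq_mul, div_mul_cancel₀ _ hcu.ne'] at this
  linarith

theorem Matrix.dotProduct_le_mul_of_mulVec_le_smul {A : Matrix ι κ ℝ} {b : ι → ℝ} {c : κ → ℝ}
    {d : ℝ} (hne : {x | A *ᵥ x ≤ b}.Nonempty) (h : ∀ x, A *ᵥ x ≤ b → c ⬝ᵥ x ≤ d)
    {x : κ → ℝ} {t : ℝ} (ht : 0 ≤ t) (hx : A *ᵥ x ≤ t • b) : c ⬝ᵥ x ≤ t * d := by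
  rcases ht.eq_or_lt with rfl | ht
  · obtain ⟨x₀, hx₀⟩ := hne
    simpa using dotProduct_nonpos_of_mulVec_nonpos hx₀ h (by simpa using hx)
  · have := h (t⁻¹ • x) fun i => by
      simpa [mulVec_smul, inv_mul_le_iff₀ ht] using hx i
    rwa [dotProduct_smul, smul_eq_mul, inv_mul_le_iff₀ ht] at this

theorem Matrix.exists_nonneg_vecMul_eq_of_forall_le [Fintype ι] {A : Matrix ι κ ℝ} {b : ι → ℝ}
    {c : κ → ℝ} {d : ℝ} (hne : {x | A *ᵥ x ≤ b}.Nonempty) (h : ∀ x, A *ᵥ x ≤ b → c ⬝ᵥ x ≤ d) :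
    ∃ y, 0 ≤ y ∧ y ᵥ* A = c ∧ y ⬝ᵥ b ≤ d := by
  -- homogenize: the rows `(A i, b i)` and `(0, 1)` generate `(c, d)` as a cone
  obtain ⟨y, hy, hyM⟩ : ∃ y, 0 ≤ y ∧
      y ᵥ* fromBlocks A (replicateCol Unit b) 0 (1 : Matrix Unit Unit ℝ) =
        Sum.elim c fun _ => d := by
    refine exists_nonneg_vecMul_eq _ fun w hw => ?_
    obtain ⟨u, t, rfl⟩ : ∃ u t, w = Sum.elim u t := ⟨_, _, (Sum.elim_comp_inl_inr w).symm⟩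
    have hcol : replicateCol Unit b *ᵥ t = t () • b := by
      ext i; simp [mulVec, dotProduct, mul_comm]
    simp only [fromBlocks_mulVec, Sum.elim_comp_inl, Sum.elim_comp_inr, zero_mulVec, one_mulVec,
      zero_add, hcol, sumElim_dotProduct_sumElim] at hw ⊢
    have ht : 0 ≤ t () := hw (Sum.inr ())
    have hAu : A *ᵥ (-u) ≤ t () • b := fun i => by
      simpa [mulVec_neg, neg_le_iff_add_nonneg'] using hw (Sum.inl i)
    have := dotProduct_le_mul_of_mulVec_le_smul hne h ht hAu
    have hd : (fun _ => d) ⬝ᵥ t = d * t () := by simp [dotProduct]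
    rw [dotProduct_neg] at this
    rw [hd]
    linarith
  refine ⟨y ∘ Sum.inl, fun i => hy _, ?_, ?_⟩
  · simpa [vecMul_fromBlocks] using congrArg (· ∘ Sum.inl) hyM
  · have := congrFun hyM (Sum.inr ())
    have hb : (y ∘ Sum.inl ᵥ* replicateCol Unit b) () = y ∘ Sum.inl ⬝ᵥ b := rfl
    rw [vecMul_fromBlocks, Sum.elim_inr, Pi.add_apply, hb, vecMul_one, Sum.elim_inr,
      Function.comp_apply] at this
    linarith [show 0 ≤ y (Sum.inr ()) from hy _]

theorem Matrix.setOf_mulVec_le_subset_iff [Fintype ι] [Fintype ν] {A : Matrix ι κ ℝ} {b : ι → ℝ}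
    {A' : Matrix ν κ ℝ} {b' : ν → ℝ} (hne : {x | A *ᵥ x ≤ b}.Nonempty) :
    {x | A *ᵥ x ≤ b} ⊆ {x | A' *ᵥ x ≤ b'} ↔
      ∃ G : Matrix ν ι ℝ, (∀ j i, 0 ≤ G j i) ∧ G * A = A' ∧ G *ᵥ b ≤ b' := by
  constructor
  · intro hsub
    choose y hy hyA hyb using fun j =>
      exists_nonneg_vecMul_eq_of_forall_le (c := A' j) (d := b' j) hne fun x hx => hsub hx j
    exact ⟨Matrix.of y, hy, funext fun j => (mul_apply_eq_vecMul _ _ j).trans (hyA j), hyb⟩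
  · rintro ⟨G, hG, rfl, hGb⟩ x hx
    calc (G * A) *ᵥ x = G *ᵥ (A *ᵥ x) := (mulVec_mulVec x G A).symm
      _ ≤ G *ᵥ b := fun j => dotProduct_le_dotProduct_of_nonneg_left hx (hG j)
      _ ≤ b' := hGb

theorem Matrix.image_homothety_setOf_mulVec_le {s : ℝ} (hs : 0 < s) (r : κ → ℝ)
    (A : Matrix ι κ ℝ) (b : ι → ℝ) :
    (fun ξ => s • ξ + r) '' {x | A *ᵥ x ≤ b} = {x | A *ᵥ x ≤ s • b + A *ᵥ r} := by
  ext x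
  constructor
  · rintro ⟨ξ, hξ : A *ᵥ ξ ≤ b, rfl⟩
    show A *ᵥ (s • ξ + r) ≤ _
    rw [mulVec_add, mulVec_smul]
    exact add_le_add_left (smul_le_smul_of_nonneg_left hξ hs.le) _
  · intro hx
    refine ⟨s⁻¹ • (x - r), fun i => ?_, by simp [smul_smul, hs.ne']⟩
    have := hx i
    simp only [mulVec_smul, mulVec_sub, Pi.smul_apply, Pi.sub_apply, Pi.add_apply,
      smul_eq_mul] at this ⊢
    rw [inv_mul_le_iff₀ hs]
    linarith

end Polyhedra

/-- Feasibility characterization underlying Theorem 1 (inner approximation):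
for nonempty `P₀ = {U | F U ≤ H}` and `P = {U | F' U ≤ H'}`, a scalar `s > 0` and a
vector `r`, the inclusion `P₀ ⊆ s P + r` holds iff there exists a nonnegative matrix
`G` with `G F = F'` and `G H ≤ s H' + F' r`. -/
theorem subset_homothet_iff_nonneg_multiplier
    (p q m : ℕ) (F : Matrix (Fin p) (Fin m) ℝ) (H : Fin p → ℝ)
    (F' : Matrix (Fin q) (Fin m) ℝ) (H' : Fin q → ℝ)
    (hne : ({U : Fin m → ℝ | F.mulVec U ≤ H}).Nonempty)
    (s : ℝ) (hs : 0 < s) (r : Fin m → ℝ) :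
    ({U : Fin m → ℝ | F.mulVec U ≤ H}
        ⊆ (fun ξ => s • ξ + r) '' {U : Fin m → ℝ | F'.mulVec U ≤ H'}) ↔
      ∃ G : Matrix (Fin q) (Fin p) ℝ,
        (∀ i j, 0 ≤ G i j) ∧ G * F = F' ∧ G.mulVec H ≤ s • H' + F'.mulVec r := by
  rw [Matrix.image_homothety_setOf_mulVec_le hs r F' H']
  exact Matrix.setOf_mulVec_le_subset_iff hne
end

section
/- Let F be a real p×m matrix, H ∈ ℝ^p, and let P₀ = {U ∈ ℝ^m : F U ≤ H}. Let F' be a real q×m matrix, H' ∈ ℝ^q, and let P = {U ∈ ℝ^m : F' U ≤ H'} be nonempty. Then for every scalar β > 0 and vector t ∈ ℝ^m, the inclusion P ⊆ β P₀ + t holds if and only if there exists a real p×q matrix G with all entries nonnegative such that G F' = F and G H' ≤ β H + F t (inequalities entrywise). -/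
/-!
The homothet `β • P₀ + t` is again a polyhedron, `{U | F U ≤ β H + F t}`, so the inclusion is a
containment of polyhedra `{F' U ≤ H'} ⊆ {F U ≤ h}`: every row inequality `F_k U ≤ h_k` must be
valid on the nonempty polyhedron `P`. By the affine Farkas lemma a valid inequality is a
nonnegative combination of the rows of `F' U ≤ H'`, up to slack, and these combinations are the
rows of `G`.

Farkas' lemma comes from separating a point from the cone spanned by finitely many vectors. That
cone is closed: by Carathéodory's theorem for cones it is a finite union of images of orthants
under injective linear maps.
-/

open Finset

section Caratheodory

variable {𝕜 ι E : Type*} [Field 𝕜] [LinearOrder 𝕜] [IsStrictOrderedRing 𝕜]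
  [AddCommGroup E] [Module 𝕜 E] {v : ι → E}

-- Move along the relation `f` until the first coefficient of `c` reaches zero.
lemma exists_nonneg_sum_erase_eq_of_sum_eq_zero [DecidableEq ι] {s : Finset ι} {c f : ι → 𝕜}
    (hc : ∀ i ∈ s, 0 ≤ c i) (hf : ∑ i ∈ s, f i • v i = 0) (hpos : ∃ i ∈ s, 0 < f i) :
    ∃ j ∈ s, ∃ d : ι → 𝕜, (∀ i ∈ s.erase j, 0 ≤ d i) ∧
      ∑ i ∈ s.erase j, d i • v i = ∑ i ∈ s, c i • v i := by
  obtain ⟨j, hj, hmin⟩ := (s.filter (0 < f ·)).exists_min_image (fun i ↦ c i / f i)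
    (by simpa [Finset.Nonempty] using hpos)
  rw [mem_filter] at hj
  set μ := c j / f j
  have hμ : 0 ≤ μ := div_nonneg (hc j hj.1) hj.2.le
  refine ⟨j, hj.1, fun i ↦ c i - μ * f i, fun i hi ↦ ?_, ?_⟩
  · have hi := mem_of_mem_erase hi
    rcases lt_or_ge 0 (f i) with hfi | hfi
    · have hμi := hmin i (mem_filter.2 ⟨hi, hfi⟩)
      rw [le_div_iff₀ hfi] at hμi
      linarith
    · linarith [hc i hi, mul_nonpos_of_nonneg_of_nonpos hμ hfi]
  · have hdj : c j - μ * f j = 0 := by rw [div_mul_cancel₀ _ hj.2.ne', sub_self]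
    rw [sum_erase _ (by simp only [hdj, zero_smul])]
    simp only [sub_smul, sum_sub_distrib, mul_smul, ← smul_sum, hf, smul_zero, sub_zero]

theorem exists_linearIndepOn_nonneg_sum_eq (s : Finset ι) {c : ι → 𝕜}
    (hc : ∀ i ∈ s, 0 ≤ c i) :
    ∃ t ⊆ s, LinearIndepOn 𝕜 v t ∧ ∃ d : ι → 𝕜, (∀ i ∈ t, 0 ≤ d i) ∧
      ∑ i ∈ t, d i • v i = ∑ i ∈ s, c i • v i := by
  classical
  induction s using Finset.strongInduction generalizing c with
  | H s ih =>
  by_cases hli : LinearIndepOn 𝕜 v s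
  · exact ⟨s, subset_rfl, hli, c, hc, rfl⟩
  obtain ⟨f, hf, i, hi, hfi⟩ : ∃ f : ι → 𝕜, ∑ i ∈ s, f i • v i = 0 ∧ ∃ i ∈ s, 0 < f i := by
    simp only [linearIndepOn_finset_iff, not_forall] at hli
    obtain ⟨f, hf, i, hi, hfi⟩ := hli
    rcases lt_or_gt_of_ne hfi with hneg | hpos
    · exact ⟨-f, by simp [neg_smul, hf], i, hi, by simpa⟩
    · exact ⟨f, hf, i, hi, hpos⟩
  obtain ⟨j, hj, d, hd, hsum⟩ := exists_nonneg_sum_erase_eq_of_sum_eq_zero hc hf ⟨i, hi, hfi⟩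
  obtain ⟨t, hts, hli, e, he, hsum_t⟩ := ih _ (erase_ssubset hj) hd
  exact ⟨t, hts.trans (erase_subset _ _), hli, e, he, hsum_t.trans hsum⟩

end Caratheodory

theorem isClosed_image_nonneg_fintypeLinearCombination {ι E : Type*} [Fintype ι]
    [AddCommGroup E] [Module ℝ E] [TopologicalSpace E] [IsTopologicalAddGroup E]
    [ContinuousSMul ℝ E] [T2Space E] (v : ι → E) :
    IsClosed (Fintype.linearCombination ℝ v '' {c | 0 ≤ c}) := by
  classical
  have hcover : Fintype.linearCombination ℝ v '' {c | 0 ≤ c} =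
      ⋃ t : {t : Finset ι // LinearIndepOn ℝ v t},
        Fintype.linearCombination ℝ (fun i : (t : Finset ι) ↦ v i) '' {c | 0 ≤ c} := by
    ext x
    simp only [Set.mem_image, Set.mem_iUnion, Fintype.linearCombination_apply,
      Set.mem_ofPred_eq]
    constructor
    · rintro ⟨c, hc, rfl⟩
      obtain ⟨t, -, hli, d, hd, hsum⟩ :=
        exists_linearIndepOn_nonneg_sum_eq (v := v) univ fun i _ ↦ hc i
      exact ⟨⟨t, hli⟩, fun i ↦ d i, fun i ↦ hd i i.2,
        (sum_coe_sort t fun i ↦ d i • v i).trans hsum⟩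
    · rintro ⟨⟨t, _⟩, c, hc, rfl⟩
      refine ⟨fun i ↦ if h : i ∈ t then c ⟨i, h⟩ else 0, fun i ↦ ?_, ?_⟩
      · dsimp only [Pi.zero_apply]
        split_ifs
        exacts [hc _, le_rfl]
      · simp only [dite_smul, zero_smul, univ_eq_attach]
        exact (sum_attach_eq_sum_dite t fun i ↦ c i • v i).symm
  rw [hcover]
  refine isClosed_iUnion_of_finite fun t ↦ ?_
  have hker := LinearMap.ker_eq_bot.2 t.2.fintypeLinearCombination_injective
  exact (LinearMap.isClosedEmbedding_of_injective hker).isClosedMap _ isClosed_Ici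

namespace Matrix

variable {ι n : Type*} [Fintype n]

theorem exists_nonneg_vecMul_eq_of_forall_dotProduct_nonneg [Fintype ι] (A : Matrix ι n ℝ)
    (a : n → ℝ) (h : ∀ x, 0 ≤ A *ᵥ x → 0 ≤ a ⬝ᵥ x) : ∃ y, 0 ≤ y ∧ y ᵥ* A = a := by
  classical
  let C : ProperCone ℝ (n → ℝ) :=
    ⟨(PointedCone.positive ℝ (ι → ℝ)).map (Fintype.linearCombination ℝ A.row),
      isClosed_image_nonneg_fintypeLinearCombination A.row⟩
  have hvecMul (y : ι → ℝ) : Fintype.linearCombination ℝ A.row y = y ᵥ* A := by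
    rw [Fintype.linearCombination_apply, vecMul_eq_sum]
    rfl
  by_contra hne
  obtain ⟨f, hfC, hfa⟩ := C.hyperplane_separation_point (x₀ := a) <| by
    rintro ⟨y, hy, rfl⟩
    exact hne ⟨y, hy, (hvecMul y).symm⟩
  let x : n → ℝ := fun j ↦ f (Pi.single j 1)
  have hfx (z : n → ℝ) : f z = z ⬝ᵥ x := by
    conv_lhs => rw [pi_eq_sum_univ' z]
    simp [dotProduct, x]
  have hAx : 0 ≤ A *ᵥ x := fun i ↦ by
    have hrow : Fintype.linearCombination ℝ A.row (Pi.single i 1) = A i := by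
      rw [Fintype.linearCombination_apply_single, one_smul]
      rfl
    have hfA := hfC (A i) ⟨Pi.single i 1, Pi.single_nonneg.2 zero_le_one, hrow⟩
    rwa [hfx] at hfA
  linarith [h x hAx, hfx a]

theorem dotProduct_le_mul_of_mulVec_le_smul_s6 {A : Matrix ι n ℝ} {c : ι → ℝ} {x₀ : n → ℝ}
    (hx₀ : A *ᵥ x₀ ≤ c) {a : n → ℝ} {b : ℝ} (h : ∀ x, A *ᵥ x ≤ c → a ⬝ᵥ x ≤ b)
    {x : n → ℝ} {r : ℝ} (hr : 0 ≤ r) (hx : A *ᵥ x ≤ r • c) : a ⬝ᵥ x ≤ r * b := by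
  rcases hr.eq_or_lt with rfl | hr
  · -- `x` is a recession direction of `{A x ≤ c}`, on which `a ⬝ᵥ ·` is bounded above
    rw [zero_smul] at hx
    rw [zero_mul]
    by_contra! hax
    have hs : 0 ≤ (b - a ⬝ᵥ x₀ + 1) / (a ⬝ᵥ x) := div_nonneg (by linarith [h x₀ hx₀]) hax.le
    have hfeas := h _ <| show A *ᵥ (x₀ + ((b - a ⬝ᵥ x₀ + 1) / (a ⬝ᵥ x)) • x) ≤ c by
      rw [mulVec_add, mulVec_smul]
      exact add_le_of_le_of_nonpos hx₀ (smul_nonpos_of_nonneg_of_nonpos hs hx)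
    rw [dotProduct_add, dotProduct_smul, smul_eq_mul, div_mul_cancel₀ _ hax.ne'] at hfeas
    linarith
  · have hle := h (r⁻¹ • x) (by rw [mulVec_smul]; exact (inv_smul_le_iff_of_pos hr).2 hx)
    rwa [dotProduct_smul, smul_eq_mul, inv_mul_le_iff₀ hr] at hle

theorem exists_nonneg_vecMul_eq_dotProduct_le [Fintype ι] (A : Matrix ι n ℝ) (c : ι → ℝ)
    {x₀ : n → ℝ} (hx₀ : A *ᵥ x₀ ≤ c) (a : n → ℝ) (b : ℝ)
    (h : ∀ x, A *ᵥ x ≤ c → a ⬝ᵥ x ≤ b) :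
    ∃ y, 0 ≤ y ∧ y ᵥ* A = a ∧ y ⬝ᵥ c ≤ b := by
  -- `A' *ᵥ (x, r) = (r • c - A *ᵥ x, r)`: the homogenization of the system `A x ≤ c`
  set A' := fromBlocks (-A) (replicateCol Unit c) 0 (1 : Matrix Unit Unit ℝ)
  have hhom (x : n ⊕ Unit → ℝ) (hx : 0 ≤ A' *ᵥ x) : 0 ≤ Sum.elim (-a) (fun _ ↦ b) ⬝ᵥ x := by
    have hr : 0 ≤ x (.inr ()) := by simpa [A', fromBlocks_mulVec] using hx (.inr ())
    have hAx : A *ᵥ (x ∘ .inl) ≤ x (.inr ()) • c := fun i ↦ by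
      simpa [A', mulVec, dotProduct, mul_comm] using hx (.inl i)
    simpa [dotProduct, Fintype.sum_sum_type, mul_comm] using
      dotProduct_le_mul_of_mulVec_le_smul_s6 hx₀ h hr hAx
  obtain ⟨y, hy, hyA⟩ := exists_nonneg_vecMul_eq_of_forall_dotProduct_nonneg A' _ hhom
  refine ⟨y ∘ Sum.inl, fun i ↦ hy _, ?_, ?_⟩
  · ext j
    simpa [A', vecMul_fromBlocks, vecMul_neg] using congrFun hyA (.inl j)
  · have hyc : y ∘ Sum.inl ⬝ᵥ c + y (.inr ()) = b := by
      simpa [A', vecMul, dotProduct] using congrFun hyA (.inr ())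
    exact (le_add_of_nonneg_right (hy _)).trans_eq hyc

theorem setOf_mulVec_le_subset_iff_exists_nonneg {κ : Type*} [Fintype ι] (A : Matrix ι n ℝ)
    (c : ι → ℝ) (B : Matrix κ n ℝ) (d : κ → ℝ) (hne : {x | A *ᵥ x ≤ c}.Nonempty) :
    {x | A *ᵥ x ≤ c} ⊆ {x | B *ᵥ x ≤ d} ↔
      ∃ G : Matrix κ ι ℝ, (∀ k i, 0 ≤ G k i) ∧ G * A = B ∧ G *ᵥ c ≤ d := by
  constructor
  · intro hsub
    obtain ⟨x₀, hx₀⟩ := hne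
    choose y hy hyA hyc using fun k ↦
      exists_nonneg_vecMul_eq_dotProduct_le A c hx₀ (B k) (d k) fun x hx ↦ hsub hx k
    exact ⟨of y, fun k ↦ hy k, by ext k j; exact congrFun (hyA k) j, hyc⟩
  · rintro ⟨G, hG, rfl, hGc⟩ x hx
    calc (G * A) *ᵥ x = G *ᵥ (A *ᵥ x) := (mulVec_mulVec x G A).symm
      _ ≤ G *ᵥ c := fun k ↦ dotProduct_le_dotProduct_of_nonneg_left hx (hG k)
      _ ≤ d := hGc

theorem image_smul_add_setOf_mulVec_le {κ 𝕜 : Type*} [Field 𝕜] [LinearOrder 𝕜]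
    [IsStrictOrderedRing 𝕜] (F : Matrix κ n 𝕜) (H : κ → 𝕜) {β : 𝕜} (hβ : 0 < β) (t : n → 𝕜) :
    (fun ξ ↦ β • ξ + t) '' {x | F *ᵥ x ≤ H} = {x | F *ᵥ x ≤ β • H + F *ᵥ t} := by
  ext x
  constructor
  · rintro ⟨ξ, hξ, rfl⟩
    rw [Set.mem_ofPred_eq, mulVec_add, mulVec_smul]
    exact add_le_add_left (smul_le_smul_of_nonneg_left hξ hβ.le) _
  · intro hx
    refine ⟨β⁻¹ • (x - t), ?_, by simp [smul_smul, hβ.ne']⟩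
    rw [Set.mem_ofPred_eq, mulVec_smul, mulVec_sub, inv_smul_le_iff_of_pos hβ]
    exact sub_le_iff_le_add.2 hx

end Matrix

/-- Feasibility characterization underlying Theorem 1 (outer approximation):
for `P₀ = {U | F U ≤ H}` and nonempty `P = {U | F' U ≤ H'}`, a scalar `β > 0` and a
vector `t`, the inclusion `P ⊆ β P₀ + t` holds iff there exists a nonnegative matrix
`G` with `G F' = F` and `G H' ≤ β H + F t`. -/
theorem superset_homothet_iff_nonneg_multiplier
    (p q m : ℕ) (F : Matrix (Fin p) (Fin m) ℝ) (H : Fin p → ℝ)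
    (F' : Matrix (Fin q) (Fin m) ℝ) (H' : Fin q → ℝ)
    (hne : ({U : Fin m → ℝ | F'.mulVec U ≤ H'}).Nonempty)
    (β : ℝ) (hβ : 0 < β) (t : Fin m → ℝ) :
    ({U : Fin m → ℝ | F'.mulVec U ≤ H'}
        ⊆ (fun ξ => β • ξ + t) '' {U : Fin m → ℝ | F.mulVec U ≤ H}) ↔
      ∃ G : Matrix (Fin p) (Fin q) ℝ,
        (∀ i j, 0 ≤ G i j) ∧ G * F' = F ∧ G.mulVec H' ≤ β • H + F.mulVec t := by
  rw [Matrix.image_smul_add_setOf_mulVec_le F H hβ t]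
  exact Matrix.setOf_mulVec_le_subset_iff_exists_nonneg F' H' F _ hne
end
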